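/- arXiv:1702.00781 — 2 statements merged into one kernel-verified Lean document; each statement's English description precedes it below -/
import Mathlib

section
/- Let n and k be positive integers with 2k ≤ n−1. Let D ⊆ 2^[n] be a down set containing every subset of [n] of size k−1, and suppose U = 2^[n] \ D is nonempty. Then sdepth(U) ≥ k+1. (Combinatorially: if P_{S/I} contains all (k−1)-sets and k ≤ (n−1)/2, then sdepth(I) > k.) -/
open Finset

/-- An interval partition of a family `Q` of subsets of `[n]` (identified with `Fin n`):
a finite collection of nonempty intervals `[A,B]`, each contained in `Q`, pairwise
disjoint, and covering `Q`. -/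
structure IntervalPartition (n : ℕ) (Q : Finset (Finset (Fin n))) where
  pairs : Finset (Finset (Fin n) × Finset (Fin n))
  le : ∀ p ∈ pairs, p.1 ⊆ p.2
  sub : ∀ p ∈ pairs, Finset.Icc p.1 p.2 ⊆ Q
  disj : ∀ p ∈ pairs, ∀ q ∈ pairs, p ≠ q →
    Disjoint (Finset.Icc p.1 p.2) (Finset.Icc q.1 q.2)
  covers : ∀ C ∈ Q, ∃ p ∈ pairs, C ∈ Finset.Icc p.1 p.2

/-- The Stanley depth of a family `Q`: the largest `k` such that some interval
partition of `Q` has every interval's maximal element of size at least `k`. -/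
noncomputable def sdepth {n : ℕ} (Q : Finset (Finset (Fin n))) : ℕ :=
  sSup {k | ∃ P : IntervalPartition n Q, ∀ p ∈ P.pairs, k ≤ p.2.card}

/-- `D` is a down set in `2^[n]`. -/
def IsDownSet {n : ℕ} (D : Finset (Finset (Fin n))) : Prop :=
  ∀ B ∈ D, ∀ A, A ⊆ B → A ∈ D

/-- `B` is a maximal element of the family `D`. -/
def MaxElt {n : ℕ} (D : Finset (Finset (Fin n))) (B : Finset (Fin n)) : Prop :=
  B ∈ D ∧ ∀ C ∈ D, B ⊆ C → B = C

/-!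
Every member of `U = 2^[n] \ D` has at least `k` elements, and `U` is an up-set. Since
`k + 1 ≤ n - k`, the upward local LYM inequality gives Hall's condition for matching the
`k`-sets of `U` injectively to `(k+1)`-sets covering them, which lie in `U` as well. The matched
pairs `[A, f A]` and the singletons of the remaining sets, all of size at least `k + 1`, form an
interval partition of `U`.
-/

open scoped FinsetFamily

namespace Finset

variable {α : Type*} [DecidableEq α]

theorem Icc_eq_pair_of_wcovBy {s t : Finset α} (h : s ⩿ t) : Icc s t = {s, t} := by
  rw [← coe_inj, coe_Icc, h.Icc_eq]
  simp

variable [Fintype α]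

theorem covBy_iff_mem_upShadow_singleton {s t : Finset α} : s ⋖ t ↔ t ∈ ∂⁺ {s} := by
  simp [covBy_iff_exists_insert, mem_upShadow_iff]

theorem upShadow_eq_biUnion (𝒜 : Finset (Finset α)) : ∂⁺ 𝒜 = 𝒜.biUnion fun s => ∂⁺ {s} := by
  ext t
  simp [mem_upShadow_iff]

variable {𝒜 : Finset (Finset α)} {r : ℕ}

theorem card_le_card_upShadow (h𝒜 : (𝒜 : Set (Finset α)).Sized r)
    (hr : r + 1 ≤ Fintype.card α - r) : #𝒜 ≤ #(∂⁺ 𝒜) := by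
  have hcompl : (𝒜ᶜˢ : Set (Finset α)).Sized (Fintype.card α - r) := by
    simpa using h𝒜.compls
  have lym := local_lubell_yamamoto_meshalkin_inequality_mul hcompl
  rw [card_compls, shadow_compls, card_compls,
    Nat.sub_sub_self (by omega : r ≤ Fintype.card α)] at lym
  exact Nat.le_of_mul_le_mul_right (lym.trans (Nat.mul_le_mul_left _ hr)) (by omega)

theorem exists_injOn_covBy_of_sized (h𝒜 : (𝒜 : Set (Finset α)).Sized r)
    (hr : r + 1 ≤ Fintype.card α - r) :
    ∃ f : Finset α → Finset α, Set.InjOn f 𝒜 ∧ ∀ s ∈ 𝒜, s ⋖ f s := by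
  have hall (u : Finset 𝒜) : #u ≤ #(u.biUnion fun s => ∂⁺ {s.1}) := by
    have hsized : ((u.image Subtype.val : Finset (Finset α)) : Set (Finset α)).Sized r :=
      fun s hs => by
        obtain ⟨s, -, rfl⟩ := mem_image.1 hs
        exact h𝒜 s.2
    have := card_le_card_upShadow hsized hr
    rwa [upShadow_eq_biUnion, image_biUnion, card_image_of_injective _ Subtype.val_injective]
      at this
  obtain ⟨g, hg, hgcov⟩ := (all_card_le_biUnion_card_iff_exists_injective _).1 hall
  refine ⟨fun s => if hs : s ∈ 𝒜 then g ⟨s, hs⟩ else s, fun s hs t ht hst => ?_, fun s hs => ?_⟩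
  · simp only [dif_pos (mem_coe.1 hs), dif_pos (mem_coe.1 ht)] at hst
    exact congrArg Subtype.val (hg hst)
  · simpa [hs, covBy_iff_mem_upShadow_singleton] using hgcov ⟨s, hs⟩

end Finset

theorem le_sdepth {n m : ℕ} {Q : Finset (Finset (Fin n))} (hQ : Q.Nonempty)
    (P : IntervalPartition n Q) (hP : ∀ p ∈ P.pairs, m ≤ #p.2) : m ≤ sdepth Q := by
  refine le_csSup ⟨n, fun k ⟨P', hP'⟩ => ?_⟩ ⟨P, hP⟩
  obtain ⟨C, hC⟩ := hQ
  obtain ⟨p, hp, -⟩ := P'.covers C hC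
  simpa using (hP' p hp).trans (card_le_univ p.2)

namespace IntervalPartition

variable {n : ℕ} {Q S : Finset (Finset (Fin n))} {f : Finset (Fin n) → Finset (Fin n)}

def matchingPairs (Q S : Finset (Finset (Fin n))) (f : Finset (Fin n) → Finset (Fin n)) :
    Finset (Finset (Fin n) × Finset (Fin n)) :=
  S.image (fun A => (A, f A)) ∪ (Q \ (S ∪ S.image f)).image fun C => (C, C)

theorem mem_matchingPairs {p : Finset (Fin n) × Finset (Fin n)} :
    p ∈ matchingPairs Q S f ↔
      (p.1 ∈ S ∧ p.2 = f p.1) ∨ (p.2 = p.1 ∧ p.1 ∈ Q ∧ p.1 ∉ S ∧ ∀ A ∈ S, f A ≠ p.1) := by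
  obtain ⟨A, B⟩ := p
  simp only [matchingPairs, mem_union, mem_image, mem_sdiff, Prod.mk.injEq]
  grind

theorem wcovBy_of_mem_matchingPairs (hcov : ∀ A ∈ S, A ⋖ f A) {p}
    (hp : p ∈ matchingPairs Q S f) : p.1 ⩿ p.2 := by
  rcases mem_matchingPairs.1 hp with ⟨hA, hB⟩ | ⟨hB, -⟩
  · exact hB ▸ (hcov _ hA).wcovBy
  · exact hB ▸ WCovBy.refl _

theorem eq_of_mem_matchingPairs (hf : Set.InjOn f S) (hfS : ∀ A ∈ S, f A ∉ S) {p q C}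
    (hp : p ∈ matchingPairs Q S f) (hq : q ∈ matchingPairs Q S f)
    (hCp : C = p.1 ∨ C = p.2) (hCq : C = q.1 ∨ C = q.2) : p = q := by
  obtain ⟨A, B⟩ := p
  obtain ⟨A', B'⟩ := q
  rw [mem_matchingPairs] at hp hq
  grind [Set.InjOn]

def ofMatching (hSQ : S ⊆ Q) (hf : Set.InjOn f S) (hcov : ∀ A ∈ S, A ⋖ f A)
    (hfQ : ∀ A ∈ S, f A ∈ Q) (hfS : ∀ A ∈ S, f A ∉ S) : IntervalPartition n Q where
  pairs := matchingPairs Q S f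
  le _ hp := (wcovBy_of_mem_matchingPairs hcov hp).le
  sub p hp := by
    rw [Icc_eq_pair_of_wcovBy (wcovBy_of_mem_matchingPairs hcov hp), insert_subset_iff,
      singleton_subset_iff]
    rcases mem_matchingPairs.1 hp with ⟨hA, hB⟩ | ⟨hB, hA, -⟩
    · exact ⟨hSQ hA, hB ▸ hfQ _ hA⟩
    · exact ⟨hA, hB ▸ hA⟩
  disj p hp q hq hpq := by
    rw [Icc_eq_pair_of_wcovBy (wcovBy_of_mem_matchingPairs hcov hp),
      Icc_eq_pair_of_wcovBy (wcovBy_of_mem_matchingPairs hcov hq), disjoint_left]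
    intro C hCp hCq
    exact hpq (eq_of_mem_matchingPairs hf hfS hp hq (by simpa using hCp) (by simpa using hCq))
  covers C hC := by
    by_cases hCS : C ∈ S
    · exact ⟨(C, f C), mem_matchingPairs.2 (.inl ⟨hCS, rfl⟩), mem_Icc.2 ⟨le_rfl, (hcov C hCS).le⟩⟩
    by_cases hCf : ∃ A ∈ S, f A = C
    · obtain ⟨A, hA, rfl⟩ := hCf
      exact ⟨(A, f A), mem_matchingPairs.2 (.inl ⟨hA, rfl⟩), mem_Icc.2 ⟨(hcov A hA).le, le_rfl⟩⟩
    · push Not at hCf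
      exact ⟨(C, C), mem_matchingPairs.2 (.inr ⟨rfl, hC, hCS, hCf⟩), mem_Icc.2 ⟨le_rfl, le_rfl⟩⟩

theorem le_sdepth_of_matching {m : ℕ} (hQ : Q.Nonempty) (hSQ : S ⊆ Q) (hf : Set.InjOn f S)
    (hcov : ∀ A ∈ S, A ⋖ f A) (hfQ : ∀ A ∈ S, f A ∈ Q) (hfS : ∀ A ∈ S, f A ∉ S)
    (hmS : ∀ A ∈ S, m ≤ #(f A)) (hmQ : ∀ C ∈ Q, C ∉ S → (∀ A ∈ S, f A ≠ C) → m ≤ #C) :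
    m ≤ sdepth Q :=
  le_sdepth hQ (ofMatching hSQ hf hcov hfQ hfS) fun p hp => by
    rcases mem_matchingPairs.1 hp with ⟨hA, hB⟩ | ⟨hB, hC, hCS, hCf⟩
    · exact hB ▸ hmS _ hA
    · exact hB ▸ hmQ _ hC hCS hCf

end IntervalPartition

theorem IsDownSet.notMem_of_subset {n : ℕ} {D : Finset (Finset (Fin n))} (hD : IsDownSet D)
    {A B : Finset (Fin n)} (hA : A ∉ D) (hAB : A ⊆ B) : B ∉ D :=
  fun hB => hA (hD B hB A hAB)

theorem IsDownSet.lt_card_of_notMem {n m : ℕ} {D : Finset (Finset (Fin n))} (hD : IsDownSet D)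
    (hall : ∀ A : Finset (Fin n), #A = m → A ∈ D) (hm : m ≤ n) {C : Finset (Fin n)}
    (hC : C ∉ D) : m < #C := by
  by_contra! h
  obtain ⟨B, hCB, hB⟩ := exists_superset_card_eq h (by simpa using hm)
  exact hC (hD B (hall B hB) C hCB)

theorem sdepth_ge_succ_of_all_small_sets_general
    (n k : ℕ) (hk : 1 ≤ k) (hkn : 2 * k ≤ n - 1)
    (D : Finset (Finset (Fin n))) (hD : IsDownSet D)
    (hall : ∀ A : Finset (Fin n), A.card = k - 1 → A ∈ D)
    (hU : ((Finset.univ : Finset (Finset (Fin n))) \ D).Nonempty) :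
    k + 1 ≤ sdepth ((Finset.univ : Finset (Finset (Fin n))) \ D) := by
  set U := (univ : Finset (Finset (Fin n))) \ D
  have hmemU (C : Finset (Fin n)) : C ∈ U ↔ C ∉ D := by simp [U]
  have hkU (C) (hC : C ∈ U) : k ≤ #C := by
    have := hD.lt_card_of_notMem hall (by omega) ((hmemU C).1 hC)
    omega
  set S := U.filter (#· = k)
  have hS : (S : Set (Finset (Fin n))).Sized k := fun A hA => (mem_filter.1 hA).2
  obtain ⟨f, hf, hcov⟩ := exists_injOn_covBy_of_sized hS (by rw [Fintype.card_fin]; omega)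
  have hcard (A) (hA : A ∈ S) : #(f A) = k + 1 := by
    rw [← Nat.covBy_iff_add_one_eq.1 (hcov A hA).card_finset, hS hA]
  have hfU (A) (hA : A ∈ S) : f A ∈ U :=
    (hmemU _).2 <| hD.notMem_of_subset ((hmemU A).1 (mem_filter.1 hA).1) (hcov A hA).le
  exact IntervalPartition.le_sdepth_of_matching hU (filter_subset _ U) hf hcov hfU
    (fun A hA hfA => by simpa [hcard A hA] using hS hfA) (fun A hA => (hcard A hA).ge)
    fun C hC hCS _ => (hkU C hC).lt_of_ne fun h => hCS (mem_filter.2 ⟨hC, h.symm⟩)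

/-- If the down set `D ⊆ 2^[n]` contains every `(k-1)`-set, `2k ≤ n-1`, and
`U = 2^[n] \ D` is nonempty, then `sdepth(U) ≥ k+1`. -/
theorem sdepth_ge_succ_of_all_small_sets
    (n k : ℕ) (hn : 1 ≤ n) (hk : 1 ≤ k) (hkn : 2 * k ≤ n - 1)
    (D : Finset (Finset (Fin n))) (hD : IsDownSet D)
    (hall : ∀ A : Finset (Fin n), A.card = k - 1 → A ∈ D)
    (hU : ((Finset.univ : Finset (Finset (Fin n))) \ D).Nonempty) :
    k + 1 ≤ sdepth ((Finset.univ : Finset (Finset (Fin n))) \ D) :=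
  sdepth_ge_succ_of_all_small_sets_general n k hk hkn D hD hall hU
end

section
/- Suppose there exist an integer n ≥ 1 and a nonempty antichain A ⊆ 2^[n] with ∅ ∉ A such that U = 2^[n] \ D[A] is nonempty, sdepth(U) ≤ sdepth(D[A]), and A splits. Then there exist an integer n' ≤ n and a nonempty antichain B ⊆ 2^[n'] with ∅ ∉ B such that U' = 2^[n'] \ D[B] is nonempty, sdepth(U') ≤ sdepth(D[B]), and B does not split. -/
open Finset

/-- The closed down set `D[A]` of a family `A ⊆ 2^[n]`. -/
def downOf {n : ℕ} (A : Finset (Finset (Fin n))) : Finset (Finset (Fin n)) :=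
  Finset.univ.filter (fun C => ∃ a ∈ A, C ⊆ a)

/-- `A` is an antichain in `2^[n]`. -/
def IsAntichainSets {n : ℕ} (A : Finset (Finset (Fin n))) : Prop :=
  ∀ a ∈ A, ∀ b ∈ A, a ⊆ b → a = b

/-- The antichain `A` splits over `x`: (i) for every `S ∈ A'_x = {A \ {x} : A ∈ A, x ∈ A}`
there is `T ∈ A` with `x ∉ T` and `S ⊆ T`; and (ii)
`sdepth(D[A \ A_x]) ≥ sdepth(D[A])`. -/
def SplitsOver {n : ℕ} (A : Finset (Finset (Fin n))) (x : Fin n) : Prop :=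
  (∀ S ∈ A, x ∈ S → ∃ T ∈ A, x ∉ T ∧ S.erase x ⊆ T) ∧
  sdepth (downOf A) ≤ sdepth (downOf (A.filter (fun a => x ∉ a)))

/-- The antichain `A` splits if it splits over some `x ∈ [n]`. -/
def Splits {n : ℕ} (A : Finset (Finset (Fin n))) : Prop := ∃ x : Fin n, SplitsOver A x

/-! Call `B` a counterexample if it satisfies the hypotheses imposed on `A`. By induction on `n`
it suffices to turn a counterexample `B` on `[n+1]` that splits over `x` into one on `[n]`,
i.e. on the cube `2^([n+1] \ {x})`. Cut `2^[n+1]` along `x`: by (i) the sets of `D[B]` avoiding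
`x` form `D[B₀]`, `B₀ = B \ B_x`, and those containing `x` form the cone over `D[B₁]`,
`B₁ = {b \ {x} : x ∈ b ∈ B}`. Accordingly `U = 2^[n+1] \ D[B]` is `U₀` together with the cone
over `U₁`, where `U₀`, `U₁` are the complements of `D[B₀]`, `D[B₁]` in the smaller cube.
If `sdepth U₀ ≤ sdepth D[B₀]`, then `B₀` is a counterexample there. Otherwise (ii) gives `U₀` a
partition of depth `sdepth D[B] + 1`, and coning a partition of `U₁` of depth `sdepth D[B]`
would give `U` one of depth `sdepth D[B] + 1`; hence `sdepth U₁ < sdepth D[B] ≤ sdepth D[B₁] + 1`,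
the last step because removing `x` from the intervals through `x` of a partition of `D[B]`
partitions `D[B₁]`. So `B₁` is a counterexample there. -/

namespace IntervalPartition

variable {n : ℕ}

def HasDepth (Q : Finset (Finset (Fin n))) (k : ℕ) : Prop :=
  ∃ P : IntervalPartition n Q, ∀ p ∈ P.pairs, k ≤ p.2.card

variable {Q : Finset (Finset (Fin n))} {k : ℕ}

theorem HasDepth.mono {l : ℕ} (h : HasDepth Q k) (hlk : l ≤ k) : HasDepth Q l :=
  let ⟨P, hP⟩ := h
  ⟨P, fun p hp => hlk.trans (hP p hp)⟩

theorem HasDepth.exists_le_card (h : HasDepth Q k) (hQ : Q.Nonempty) :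
    ∃ T ∈ Q, k ≤ T.card := by
  obtain ⟨P, hP⟩ := h
  obtain ⟨C, hC⟩ := hQ
  obtain ⟨p, hp, -⟩ := P.covers C hC
  exact ⟨p.2, P.sub p hp (right_mem_Icc.2 (P.le p hp)), hP p hp⟩

theorem hasDepth_of_le_card (h : ∀ C ∈ Q, k ≤ C.card) : HasDepth Q k := by
  refine ⟨⟨Q.image fun C => (C, C), ?_, ?_, ?_, ?_⟩, ?_⟩ <;> simp only [mem_image]
  · rintro _ ⟨C, -, rfl⟩
    exact subset_refl C
  · rintro _ ⟨C, hC, rfl⟩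
    simpa [Icc_self] using hC
  · rintro _ ⟨C, -, rfl⟩ _ ⟨D, -, rfl⟩ hCD
    simpa [Icc_self] using fun h : C = D => hCD (h ▸ rfl)
  · exact fun C hC => ⟨(C, C), ⟨C, hC, rfl⟩, by simp⟩
  · rintro _ ⟨C, hC, rfl⟩
    exact h C hC

theorem hasDepth_Icc {S T : Finset (Fin n)} (h : S ⊆ T) : HasDepth (Icc S T) T.card :=
  ⟨⟨{(S, T)}, by simpa, by simp, by simp, fun _ hC => ⟨(S, T), mem_singleton_self _, hC⟩⟩,
    by simp⟩

theorem HasDepth.union {Q₁ Q₂ : Finset (Finset (Fin n))} (h₁ : HasDepth Q₁ k)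
    (h₂ : HasDepth Q₂ k) (hQ : Disjoint Q₁ Q₂) : HasDepth (Q₁ ∪ Q₂) k := by
  obtain ⟨P₁, hP₁⟩ := h₁
  obtain ⟨P₂, hP₂⟩ := h₂
  refine ⟨⟨P₁.pairs ∪ P₂.pairs, ?_, ?_, ?_, ?_⟩, ?_⟩ <;> simp only [mem_union]
  · rintro p (hp | hp)
    exacts [P₁.le p hp, P₂.le p hp]
  · rintro p (hp | hp)
    exacts [(P₁.sub p hp).trans subset_union_left, (P₂.sub p hp).trans subset_union_right]
  · rintro p (hp | hp) q (hq | hq) hpq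
    · exact P₁.disj p hp q hq hpq
    · exact hQ.mono (P₁.sub p hp) (P₂.sub q hq)
    · exact hQ.symm.mono (P₂.sub p hp) (P₁.sub q hq)
    · exact P₂.disj p hp q hq hpq
  · rintro C (hC | hC)
    · obtain ⟨p, hp, hCp⟩ := P₁.covers C hC
      exact ⟨p, Or.inl hp, hCp⟩
    · obtain ⟨p, hp, hCp⟩ := P₂.covers C hC
      exact ⟨p, Or.inr hp, hCp⟩
  · rintro p (hp | hp)
    exacts [hP₁ p hp, hP₂ p hp]

/-- Every interval `[S, T]` of a partition of `Q` that meets `f '' Q'` is replaced by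
`[φ S, φ T]`, which must be exactly the part of `Q'` that `f` sends into `[S, T]`. -/
theorem HasDepth.pullback {m l : ℕ} {Q' : Finset (Finset (Fin m))} (h : HasDepth Q k)
    (f : Finset (Fin m) → Finset (Fin n)) (φ : Finset (Fin n) → Finset (Fin m))
    (hφ : Monotone φ) (hf : ∀ C ∈ Q', f C ∈ Q)
    (hmem : ∀ S T, Icc S T ⊆ Q → (∃ C₀ ∈ Q', f C₀ ∈ Icc S T) →
      ∀ C, C ∈ Icc (φ S) (φ T) ↔ C ∈ Q' ∧ f C ∈ Icc S T)
    (hcard : ∀ S T, Icc S T ⊆ Q → (∃ C₀ ∈ Q', f C₀ ∈ Icc S T) →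
      k ≤ T.card → l ≤ (φ T).card) :
    HasDepth Q' l := by
  classical
  obtain ⟨P, hP⟩ := h
  set R := P.pairs.filter fun p => ∃ C₀ ∈ Q', f C₀ ∈ Icc p.1 p.2
  have hR : ∀ p ∈ R, p ∈ P.pairs ∧ ∃ C₀ ∈ Q', f C₀ ∈ Icc p.1 p.2 := fun p hp => mem_filter.1 hp
  refine ⟨⟨R.image fun p => (φ p.1, φ p.2), ?_, ?_, ?_, ?_⟩, ?_⟩ <;> simp only [mem_image]
  · rintro _ ⟨p, hp, rfl⟩
    exact hφ (P.le p (hR p hp).1)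
  · rintro _ ⟨p, hp, rfl⟩ C hC
    exact ((hmem _ _ (P.sub p (hR p hp).1) (hR p hp).2 C).1 hC).1
  · rintro _ ⟨p, hp, rfl⟩ _ ⟨q, hq, rfl⟩ hpq
    refine disjoint_left.2 fun C hCp hCq => ?_
    have hpq' : p ≠ q := by rintro rfl; exact hpq rfl
    exact disjoint_left.1 (P.disj p (hR p hp).1 q (hR q hq).1 hpq')
      ((hmem _ _ (P.sub p (hR p hp).1) (hR p hp).2 C).1 hCp).2
      ((hmem _ _ (P.sub q (hR q hq).1) (hR q hq).2 C).1 hCq).2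
  · intro C hC
    obtain ⟨p, hp, hCp⟩ := P.covers (f C) (hf C hC)
    have hpR : p ∈ R := mem_filter.2 ⟨hp, C, hC, hCp⟩
    exact ⟨_, ⟨p, hpR, rfl⟩, (hmem _ _ (P.sub p hp) (hR p hpR).2 C).2 ⟨hC, hCp⟩⟩
  · rintro _ ⟨p, hp, rfl⟩
    exact hcard _ _ (P.sub p (hR p hp).1) (hR p hp).2 (hP p (hR p hp).1)

end IntervalPartition

section

open IntervalPartition

variable {n : ℕ} {Q : Finset (Finset (Fin n))} {k : ℕ}

theorem le_sdepth_iff (hQ : Q.Nonempty) : k ≤ sdepth Q ↔ HasDepth Q k := by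
  have hbdd : BddAbove {k | HasDepth Q k} := ⟨n, fun k hk => by
    obtain ⟨T, -, hT⟩ := hk.exists_le_card hQ
    exact hT.trans ((card_le_univ T).trans_eq (Fintype.card_fin n))⟩
  refine ⟨fun h => HasDepth.mono ?_ h, fun h => le_csSup hbdd h⟩
  exact Nat.sSup_mem ⟨0, hasDepth_of_le_card fun _ _ => Nat.zero_le _⟩ hbdd

theorem hasDepth_sdepth (hQ : Q.Nonempty) : HasDepth Q (sdepth Q) :=
  (le_sdepth_iff hQ).1 le_rfl

end

namespace Finset

variable {α : Type*} [DecidableEq α] {x : α} {S T C : Finset α}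

theorem mem_Icc_erase_erase (hT : x ∈ T) :
    C ∈ Icc (S.erase x) (T.erase x) ↔ x ∉ C ∧ insert x C ∈ Icc S T := by
  simp only [mem_Icc, subset_erase, insert_subset_iff, ← subset_insert_iff]
  tauto

theorem mem_Icc_insert_insert (hS : x ∉ S) :
    C ∈ Icc (insert x S) (insert x T) ↔ x ∈ C ∧ C.erase x ∈ Icc S T := by
  simp only [mem_Icc, subset_erase, insert_subset_iff, subset_insert_iff]
  tauto

theorem map_mem_Icc_map {β : Type*} [DecidableEq β] (e : α ↪ β) :
    C.map e ∈ Icc (S.map e) (T.map e) ↔ C ∈ Icc S T := by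
  simp only [mem_Icc, map_subset_map]

end Finset

namespace IntervalPartition

variable {n : ℕ} {Q : Finset (Finset (Fin n))} {k : ℕ}

theorem HasDepth.memberSubfamily (h : HasDepth Q (k + 1)) (x : Fin n) :
    HasDepth (Q.memberSubfamily x) k := by
  refine h.pullback (insert x) (·.erase x) (fun _ _ h => erase_subset_erase x h)
    (fun C hC => (mem_memberSubfamily.1 hC).1) (fun S T hQ ⟨_, _, hC₀⟩ C => ?_)
    (fun S T _ ⟨_, _, hC₀⟩ hT => ?_)
  · rw [mem_Icc_erase_erase ((mem_Icc.1 hC₀).2 (mem_insert_self x _)), mem_memberSubfamily]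
    exact ⟨fun ⟨hxC, hC⟩ => ⟨⟨hQ hC, hxC⟩, hC⟩, fun ⟨⟨_, hxC⟩, hC⟩ => ⟨hxC, hC⟩⟩
  · rw [card_erase_of_mem ((mem_Icc.1 hC₀).2 (mem_insert_self x _))]
    omega

/-- The sets of `Q` containing `x` form the cone over `Q.memberSubfamily x`, and coning an
interval partition raises every top by one. -/
theorem HasDepth.of_subfamilies (x : Fin n) (h₀ : HasDepth (Q.nonMemberSubfamily x) (k + 1))
    (h₁ : HasDepth (Q.memberSubfamily x) k) : HasDepth Q (k + 1) := by
  have hxQ : ∀ {S}, S ∈ Q.memberSubfamily x → x ∉ S := fun hS => (mem_memberSubfamily.1 hS).2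
  have hcone : HasDepth (Q.filter (x ∈ ·)) (k + 1) := by
    refine h₁.pullback (·.erase x) (insert x) (fun _ _ h => insert_subset_insert x h)
      (fun C hC => ?_) (fun S T hQ ⟨_, _, hC₀⟩ C => ?_) (fun S T hQ ⟨_, _, hC₀⟩ hT => ?_)
    · obtain ⟨hCQ, hxC⟩ := mem_filter.1 hC
      exact mem_memberSubfamily.2 ⟨by rwa [insert_erase hxC], notMem_erase x C⟩
    · rw [mem_Icc_insert_insert (hxQ (hQ (left_mem_Icc.2 (nonempty_Icc.1 ⟨_, hC₀⟩)))),
        mem_filter]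
      refine ⟨fun ⟨hxC, hC⟩ => ⟨⟨?_, hxC⟩, hC⟩, fun ⟨⟨_, hxC⟩, hC⟩ => ⟨hxC, hC⟩⟩
      simpa [insert_erase hxC] using (mem_memberSubfamily.1 (hQ hC)).1
    · rw [card_insert_of_notMem (hxQ (hQ (right_mem_Icc.2 (nonempty_Icc.1 ⟨_, hC₀⟩))))]
      omega
  rw [← filter_union_filter_not_eq (x ∈ ·) Q]
  exact hcone.union h₀ (disjoint_filter_filter_not _ _ _)

variable {m : ℕ} (e : Fin m ↪ Fin n) {H : Finset (Finset (Fin m))}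

theorem HasDepth.map (h : HasDepth H k) :
    HasDepth (H.map (mapEmbedding e).toEmbedding) k := by
  refine h.pullback (·.preimage e e.injective.injOn) (·.map e) (mapEmbedding e).monotone
    (fun C hC => ?_) (fun S T hH _ C => ?_) (fun _ T _ _ hT => (card_map e).symm ▸ hT)
  · obtain ⟨u, hu, rfl⟩ := mem_map.1 hC
    simpa using hu
  · constructor
    · intro hC
      obtain ⟨u, -, rfl⟩ := subset_map_iff.1 (mem_Icc.1 hC).2
      rw [map_mem_Icc_map] at hC
      exact ⟨mem_map_of_mem _ (hH hC), by rwa [preimage_map]⟩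
    · rintro ⟨hC, hCST⟩
      obtain ⟨u, -, rfl⟩ := mem_map.1 hC
      simpa [map_mem_Icc_map] using hCST

theorem HasDepth.of_map (h : HasDepth (H.map (mapEmbedding e).toEmbedding) k) :
    HasDepth H k := by
  have hmap : ∀ {T}, T ∈ H.map (mapEmbedding e).toEmbedding →
      ∃ u : Finset (Fin m), T = u.map e := fun hT => by
    obtain ⟨u, -, rfl⟩ := mem_map.1 hT
    exact ⟨u, rfl⟩
  refine h.pullback (·.map e) (·.preimage e e.injective.injOn) (monotone_preimage e.injective)
    (fun C hC => mem_map_of_mem _ hC) (fun S T hH ⟨_, _, hC₀⟩ C => ?_)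
    (fun S T hH ⟨_, _, hC₀⟩ hT => ?_)
  · obtain ⟨v, rfl⟩ := hmap (hH (right_mem_Icc.2 (nonempty_Icc.1 ⟨_, hC₀⟩)))
    obtain ⟨u, -, rfl⟩ := subset_map_iff.1 (nonempty_Icc.1 ⟨_, hC₀⟩)
    rw [preimage_map, preimage_map, map_mem_Icc_map]
    exact ⟨fun hC => ⟨(mem_map' _).1 (hH (map_mem_Icc_map e |>.2 hC)), hC⟩, And.right⟩
  · obtain ⟨v, rfl⟩ := hmap (hH (right_mem_Icc.2 (nonempty_Icc.1 ⟨_, hC₀⟩)))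
    rwa [preimage_map, ← card_map e]

end IntervalPartition

section

variable {m n : ℕ}

open IntervalPartition in
theorem sdepth_map (e : Fin m ↪ Fin n) {H : Finset (Finset (Fin m))} (hH : H.Nonempty) :
    sdepth (H.map (mapEmbedding e).toEmbedding) = sdepth H :=
  eq_of_forall_le_iff fun k => by
    rw [le_sdepth_iff hH, le_sdepth_iff (hH.map)]
    exact ⟨HasDepth.of_map e, HasDepth.map e⟩

@[simp]
theorem mem_downOf {B : Finset (Finset (Fin n))} {C : Finset (Fin n)} :
    C ∈ downOf B ↔ ∃ b ∈ B, C ⊆ b := by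
  simp [downOf]

theorem downOf_nonempty {B : Finset (Finset (Fin n))} (hB : B.Nonempty) :
    (downOf B).Nonempty :=
  let ⟨b, hb⟩ := hB
  ⟨b, mem_downOf.2 ⟨b, hb, subset_refl b⟩⟩

theorem memberSubfamily_downOf (B : Finset (Finset (Fin n))) (x : Fin n) :
    (downOf B).memberSubfamily x = downOf (B.memberSubfamily x) := by
  ext C
  simp only [mem_memberSubfamily, mem_downOf]
  constructor
  · rintro ⟨⟨b, hb, hCb⟩, hxC⟩
    have hxb := insert_subset_iff.1 hCb
    exact ⟨b.erase x, ⟨by rwa [insert_erase hxb.1], notMem_erase x b⟩, subset_erase.2 ⟨hxb.2, hxC⟩⟩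
  · rintro ⟨b, ⟨hb, hxb⟩, hCb⟩
    exact ⟨⟨_, hb, insert_subset_insert x hCb⟩, fun hxC => hxb (hCb hxC)⟩

theorem nonMemberSubfamily_downOf {B : Finset (Finset (Fin n))} {x : Fin n}
    (h : ∀ S ∈ B, x ∈ S → ∃ T ∈ B, x ∉ T ∧ S.erase x ⊆ T) :
    (downOf B).nonMemberSubfamily x = downOf (B.nonMemberSubfamily x) := by
  ext C
  simp only [mem_nonMemberSubfamily, mem_downOf]
  constructor
  · rintro ⟨⟨b, hb, hCb⟩, hxC⟩
    by_cases hxb : x ∈ b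
    · obtain ⟨T, hT, hxT, hbT⟩ := h b hb hxb
      exact ⟨T, ⟨hT, hxT⟩, (subset_erase.2 ⟨hCb, hxC⟩).trans hbT⟩
    · exact ⟨b, ⟨hb, hxb⟩, hCb⟩
  · rintro ⟨b, ⟨hb, hxb⟩, hCb⟩
    exact ⟨⟨b, hb, hCb⟩, fun hxC => hxb (hCb hxC)⟩

theorem memberSubfamily_univ_sdiff (D : Finset (Finset (Fin n))) (x : Fin n) :
    (univ \ D).memberSubfamily x = (univ \ D.memberSubfamily x).nonMemberSubfamily x := by
  ext C
  simp only [mem_memberSubfamily, mem_nonMemberSubfamily, mem_sdiff, mem_univ, true_and]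
  tauto

theorem nonMemberSubfamily_univ_sdiff (D : Finset (Finset (Fin n))) (x : Fin n) :
    (univ \ D).nonMemberSubfamily x = (univ \ D.nonMemberSubfamily x).nonMemberSubfamily x := by
  ext C
  simp only [mem_nonMemberSubfamily, mem_sdiff, mem_univ, true_and]
  tauto

theorem downOf_map (e : Fin m ↪ Fin n) (B : Finset (Finset (Fin m))) :
    downOf (B.map (mapEmbedding e).toEmbedding) = (downOf B).map (mapEmbedding e).toEmbedding := by
  ext C
  simp only [mem_downOf, mem_map, RelEmbedding.coe_toEmbedding, mapEmbedding_apply]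
  constructor
  · rintro ⟨_, ⟨b, hb, rfl⟩, hCb⟩
    obtain ⟨u, hub, rfl⟩ := subset_map_iff.1 hCb
    exact ⟨u, ⟨b, hb, hub⟩, rfl⟩
  · rintro ⟨u, ⟨b, hb, hub⟩, rfl⟩
    exact ⟨_, ⟨b, hb, rfl⟩, map_subset_map.2 hub⟩

theorem map_univ_succAboveEmb (x : Fin (n + 1)) :
    (univ : Finset (Finset (Fin n))).map (mapEmbedding x.succAboveEmb).toEmbedding =
      (univ : Finset (Finset (Fin (n + 1)))).nonMemberSubfamily x := by
  ext C
  simp only [mem_map, mem_univ, true_and, RelEmbedding.coe_toEmbedding, mapEmbedding_apply,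
    mem_nonMemberSubfamily]
  constructor
  · rintro ⟨u, rfl⟩
    simp [Fin.succAbove_ne]
  · intro hxC
    have hC : C ⊆ univ.map x.succAboveEmb := fun y hy => by
      have := Fin.univ_succAbove n x ▸ mem_univ y
      simp only [mem_cons] at this
      exact this.resolve_left (by rintro rfl; exact hxC hy)
    obtain ⟨u, -, rfl⟩ := subset_map_iff.1 hC
    exact ⟨u, rfl⟩

theorem nonMemberSubfamily_univ (x : Fin n) :
    (univ : Finset (Finset (Fin n))).nonMemberSubfamily x = Icc ∅ (univ.erase x) := by
  ext C
  simp [subset_erase]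

end

section

variable {m n : ℕ}

theorem IsAntichainSets.memberSubfamily {B : Finset (Finset (Fin n))} (hB : IsAntichainSets B)
    (x : Fin n) : IsAntichainSets (B.memberSubfamily x) := by
  intro a ha b hb hab
  simp only [mem_memberSubfamily] at ha hb
  have := hB _ ha.1 _ hb.1 (insert_subset_insert x hab)
  rw [← erase_insert ha.2, this, erase_insert hb.2]

theorem IsAntichainSets.nonMemberSubfamily {B : Finset (Finset (Fin n))}
    (hB : IsAntichainSets B) (x : Fin n) : IsAntichainSets (B.nonMemberSubfamily x) :=
  fun _ ha _ hb => hB _ (mem_filter.1 ha).1 _ (mem_filter.1 hb).1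

theorem IsAntichainSets.of_map (e : Fin m ↪ Fin n) {B : Finset (Finset (Fin m))}
    (hB : IsAntichainSets (B.map (mapEmbedding e).toEmbedding)) : IsAntichainSets B :=
  fun _ ha _ hb hab => map_injective e <|
    hB _ (mem_map_of_mem _ ha) _ (mem_map_of_mem _ hb) (map_subset_map.2 hab)

/-- `B` violates `sdepth (2^[n] \ D[B]) > sdepth D[B]`. -/
structure IsCounterexample (B : Finset (Finset (Fin n))) : Prop where
  isAntichainSets : IsAntichainSets B
  nonempty : B.Nonempty
  empty_notMem : ∅ ∉ B
  compl_nonempty : (univ \ downOf B).Nonempty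
  sdepth_compl_le : sdepth (univ \ downOf B) ≤ sdepth (downOf B)

/-- A counterexample inside the subcube of sets avoiding `x` is a counterexample one
dimension lower. -/
theorem IsCounterexample.exists_of_forall_notMem {x : Fin (n + 1)}
    {𝒜 : Finset (Finset (Fin (n + 1)))} (hx : ∀ a ∈ 𝒜, x ∉ a) (hanti : IsAntichainSets 𝒜)
    (hne : 𝒜.Nonempty) (h0 : ∅ ∉ 𝒜) (hU : ((univ \ downOf 𝒜).nonMemberSubfamily x).Nonempty)
    (hle : sdepth ((univ \ downOf 𝒜).nonMemberSubfamily x) ≤ sdepth (downOf 𝒜)) :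
    ∃ 𝒜₀ : Finset (Finset (Fin n)), IsCounterexample 𝒜₀ := by
  set E := (mapEmbedding x.succAboveEmb).toEmbedding
  obtain ⟨𝒜₀, -, rfl⟩ := subset_map_iff.1 fun a ha => by
    rw [map_univ_succAboveEmb, mem_nonMemberSubfamily]
    exact ⟨mem_univ a, hx a ha⟩
  have hU₀ : (univ \ downOf (𝒜₀.map E)).nonMemberSubfamily x = (univ \ downOf 𝒜₀).map E := by
    rw [Finset.map_sdiff, map_univ_succAboveEmb, downOf_map]
    ext C
    simp only [mem_nonMemberSubfamily, mem_sdiff, mem_univ, true_and]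
    tauto
  rw [hU₀] at hU hle
  rw [downOf_map, sdepth_map _ (map_nonempty.1 hU),
    sdepth_map _ (downOf_nonempty (map_nonempty.1 hne))] at hle
  exact ⟨𝒜₀, ⟨hanti.of_map _, map_nonempty.1 hne, fun h => h0 (mem_map_of_mem E h),
    map_nonempty.1 hU, hle⟩⟩

end

section

variable {n : ℕ} {B : Finset (Finset (Fin (n + 1)))} {x : Fin (n + 1)}

open IntervalPartition

theorem IsCounterexample.not_hasDepth_memberSubfamily (hB : IsCounterexample B)
    (h₀ : HasDepth ((univ \ downOf B).nonMemberSubfamily x) (sdepth (downOf B) + 1)) :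
    ¬ HasDepth ((univ \ downOf (B.memberSubfamily x)).nonMemberSubfamily x)
      (sdepth (downOf B)) := by
  intro h₁
  rw [← memberSubfamily_downOf, ← memberSubfamily_univ_sdiff] at h₁
  have := (le_sdepth_iff hB.compl_nonempty).2 (h₀.of_subfamilies x h₁)
  have := hB.sdepth_compl_le
  omega

/-- If no set of `B` contains `x`, the sets avoiding `x` outside `D[B]` form the whole subcube,
a single interval with top of size `n ≥ sdepth D[B]`. -/
theorem IsCounterexample.memberSubfamily_nonempty (hB : IsCounterexample B)
    (h₁ : ¬ HasDepth ((univ \ downOf (B.memberSubfamily x)).nonMemberSubfamily x)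
      (sdepth (downOf B))) :
    (B.memberSubfamily x).Nonempty := by
  rw [nonempty_iff_ne_empty]
  intro hB₁
  obtain ⟨T, hT, hdT⟩ :=
    (hasDepth_sdepth (downOf_nonempty hB.nonempty)).exists_le_card (downOf_nonempty hB.nonempty)
  obtain ⟨b, hb, hTb⟩ := mem_downOf.1 hT
  have hxb : x ∉ b := fun hxb => by
    have : b.erase x ∈ B.memberSubfamily x :=
      mem_memberSubfamily.2 ⟨by rwa [insert_erase hxb], notMem_erase x b⟩
    simp [hB₁] at this
  have hTn : T.card ≤ n := by
    simpa using card_le_card (subset_erase.2 ⟨subset_univ T, fun hxT => hxb (hTb hxT)⟩)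
  apply h₁
  rw [hB₁, show downOf (∅ : Finset (Finset (Fin (n + 1)))) = ∅ by simp [downOf], sdiff_empty,
    nonMemberSubfamily_univ]
  exact (hasDepth_Icc (empty_subset _)).mono (by simp; omega)

theorem IsCounterexample.exists_of_not_hasDepth_memberSubfamily (hB : IsCounterexample B)
    (h₁ : ¬ HasDepth ((univ \ downOf (B.memberSubfamily x)).nonMemberSubfamily x)
      (sdepth (downOf B))) :
    ∃ B₀ : Finset (Finset (Fin n)), IsCounterexample B₀ := by
  set U₁ := (univ \ downOf (B.memberSubfamily x)).nonMemberSubfamily x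
  have hU₁ : U₁.Nonempty := by
    by_contra h
    exact h₁ (hasDepth_of_le_card fun C hC => (h ⟨C, hC⟩).elim)
  have hlt : sdepth U₁ < sdepth (downOf B) := lt_of_not_ge fun h => h₁ ((le_sdepth_iff hU₁).1 h)
  obtain ⟨k, hk⟩ : ∃ k, sdepth (downOf B) = k + 1 := Nat.exists_eq_add_one_of_ne_zero (by omega)
  have hB₁ := hB.memberSubfamily_nonempty h₁
  have hD₁ : HasDepth (downOf (B.memberSubfamily x)) k := by
    rw [← memberSubfamily_downOf]
    exact (hk ▸ hasDepth_sdepth (downOf_nonempty hB.nonempty)).memberSubfamily x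
  refine IsCounterexample.exists_of_forall_notMem (fun a ha => (mem_memberSubfamily.1 ha).2)
    (hB.isAntichainSets.memberSubfamily x) hB₁ (fun h0 => ?_) hU₁ ?_
  · -- `∅ ∈ B₁` forces `D[B₁] = {∅}`, hence `sdepth D[B] = 1`, while `∅ ∉ U₁`.
    obtain ⟨T, hT, hkT⟩ := hD₁.exists_le_card (downOf_nonempty hB₁)
    obtain ⟨b, hb, hTb⟩ := mem_downOf.1 hT
    obtain rfl := (hB.isAntichainSets.memberSubfamily x _ h0 b hb (empty_subset b)).symm
    apply h₁
    refine hasDepth_of_le_card fun C hC => ?_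
    have hC0 : C ≠ ∅ := by
      rintro rfl
      simp only [U₁, mem_nonMemberSubfamily, mem_sdiff, mem_downOf] at hC
      exact hC.1.2 ⟨∅, h0, subset_refl _⟩
    rw [subset_empty.1 hTb, card_empty] at hkT
    have := card_pos.2 (nonempty_iff_ne_empty.2 hC0)
    omega
  · have := (le_sdepth_iff (downOf_nonempty hB₁)).2 hD₁
    show sdepth U₁ ≤ _
    omega

theorem IsCounterexample.exists_of_splitsOver (hB : IsCounterexample B) (hx : SplitsOver B x) :
    ∃ B₀ : Finset (Finset (Fin n)), IsCounterexample B₀ := by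
  obtain ⟨hsplit, hdepth⟩ : _ ∧ sdepth (downOf B) ≤ sdepth (downOf (B.nonMemberSubfamily x)) := hx
  set U₀ := (univ \ downOf B).nonMemberSubfamily x
  by_cases h : U₀.Nonempty ∧ sdepth U₀ ≤ sdepth (downOf (B.nonMemberSubfamily x))
  · have hB₀ : (B.nonMemberSubfamily x).Nonempty := by
      obtain ⟨b, hb⟩ := hB.nonempty
      by_cases hxb : x ∈ b
      · obtain ⟨T, hT, hxT, -⟩ := hsplit b hb hxb
        exact ⟨T, mem_nonMemberSubfamily.2 ⟨hT, hxT⟩⟩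
      · exact ⟨b, mem_nonMemberSubfamily.2 ⟨hb, hxb⟩⟩
    rw [show U₀ = (univ \ downOf (B.nonMemberSubfamily x)).nonMemberSubfamily x by
      rw [← nonMemberSubfamily_downOf hsplit, ← nonMemberSubfamily_univ_sdiff]] at h
    exact IsCounterexample.exists_of_forall_notMem (fun a ha => (mem_nonMemberSubfamily.1 ha).2)
      (hB.isAntichainSets.nonMemberSubfamily x) hB₀
      (fun h0 => hB.empty_notMem (mem_nonMemberSubfamily.1 h0).1) h.1 h.2
  · refine hB.exists_of_not_hasDepth_memberSubfamily (hB.not_hasDepth_memberSubfamily (x := x) ?_)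
    rcases U₀.eq_empty_or_nonempty with hU₀ | hU₀
    · exact hasDepth_of_le_card (by simp [U₀, hU₀])
    · have := not_and.1 h hU₀
      exact (le_sdepth_iff hU₀).1 (by omega)

end

theorem IsCounterexample.exists_not_splits {n : ℕ} {B : Finset (Finset (Fin n))}
    (hB : IsCounterexample B) :
    ∃ m ≤ n, ∃ B' : Finset (Finset (Fin m)), IsCounterexample B' ∧ ¬ Splits B' := by
  induction n with
  | zero => exact ⟨0, le_rfl, B, hB, fun ⟨x, _⟩ => x.elim0⟩
  | succ n ih =>
    by_cases hsplit : Splits B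
    · obtain ⟨x, hx⟩ := hsplit
      obtain ⟨B₀, hB₀⟩ := hB.exists_of_splitsOver hx
      obtain ⟨m, hm, B', hB'⟩ := ih hB₀
      exact ⟨m, hm.trans n.le_succ, B', hB'⟩
    · exact ⟨n + 1, le_rfl, B, hB, hsplit⟩

theorem splitting_reduction_general
    (n : ℕ) (A : Finset (Finset (Fin n)))
    (hanti : IsAntichainSets A) (hAne : A.Nonempty) (hA0 : ∅ ∉ A)
    (hUne : ((Finset.univ : Finset (Finset (Fin n))) \ downOf A).Nonempty)
    (hle : sdepth ((Finset.univ : Finset (Finset (Fin n))) \ downOf A) ≤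
      sdepth (downOf A)) :
    ∃ (n' : ℕ), n' ≤ n ∧ ∃ B : Finset (Finset (Fin n')),
      IsAntichainSets B ∧ B.Nonempty ∧ ∅ ∉ B ∧
      ((Finset.univ : Finset (Finset (Fin n'))) \ downOf B).Nonempty ∧
      sdepth ((Finset.univ : Finset (Finset (Fin n'))) \ downOf B) ≤
        sdepth (downOf B) ∧
      ¬ Splits B := by
  obtain ⟨m, hm, B, hB, hB'⟩ := (IsCounterexample.mk hanti hAne hA0 hUne hle).exists_not_splits
  exact ⟨m, hm, B, hB.isAntichainSets, hB.nonempty, hB.empty_notMem, hB.compl_nonempty,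
    hB.sdepth_compl_le, hB'⟩

/-- If some nonempty antichain `A ⊆ 2^[n]` with `∅ ∉ A`, nonempty `U = 2^[n] \ D[A]`,
and `sdepth(U) ≤ sdepth(D[A])` splits, then there is `n' ≤ n` and a nonempty
antichain `B ⊆ 2^[n']` with `∅ ∉ B`, nonempty `U' = 2^[n'] \ D[B]`, and
`sdepth(U') ≤ sdepth(D[B])` that does not split. -/
theorem splitting_reduction
    (n : ℕ) (hn : 1 ≤ n) (A : Finset (Finset (Fin n)))
    (hanti : IsAntichainSets A) (hAne : A.Nonempty) (hA0 : ∅ ∉ A)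
    (hUne : ((Finset.univ : Finset (Finset (Fin n))) \ downOf A).Nonempty)
    (hle : sdepth ((Finset.univ : Finset (Finset (Fin n))) \ downOf A) ≤
      sdepth (downOf A))
    (hsplit : Splits A) :
    ∃ (n' : ℕ), n' ≤ n ∧ ∃ B : Finset (Finset (Fin n')),
      IsAntichainSets B ∧ B.Nonempty ∧ ∅ ∉ B ∧
      ((Finset.univ : Finset (Finset (Fin n'))) \ downOf B).Nonempty ∧
      sdepth ((Finset.univ : Finset (Finset (Fin n'))) \ downOf B) ≤
        sdepth (downOf B) ∧
      ¬ Splits B :=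
  splitting_reduction_general n A hanti hAne hA0 hUne hle
end
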